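/- Let k be a non-square positive integer and d a positive rational number. Then 4d²/(k − d²) is an integer if and only if some iterate f^n(∞) (n ≥ 1) of f(x) = (dx+k)/(x+d) equals p/q with integers p, q satisfying p² − kq² = ±1. -/

import Mathlib

/-- The linear fractional transformation `f(x) = (dx + k)/(x + d)` acting on
the projective line `ℚℙ¹ = OnePoint ℚ`, with `f(∞) = d`. -/
noncomputable def lft (d k : ℚ) : OnePoint ℚ → OnePoint ℚ := fun x =>
  match x with
  | none => (d : OnePoint ℚ)
  | some x => if x + d = 0 then OnePoint.infty else ((d * x + k) / (x + d) : ℚ)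

/-- The point `a/b` of the projective line, with `a/0 = ∞`. -/
noncomputable def ratio (a b : ℚ) : OnePoint ℚ :=
  if b = 0 then OnePoint.infty else ((a / b : ℚ) : OnePoint ℚ)

/-!
Put `z = d + √k` in `ℚ(√k) = QuadraticAlgebra ℚ k 0`; then `f^n(∞) = a/b` where `z^n = a + b√k`.
The element `ε = z²/(k − d²)` has norm `1` and trace `2 + 4d²/(k − d²)`, so the integrality
condition says exactly that `ε` is an algebraic integer.

If `f^n(∞) = p/q` with `p² − kq² = ±1`, then `z^n` is a rational multiple of the unit
`u = p + q√k`, so `ε^(2n) = u⁴` is integral, hence so is `ε`, and its trace is an integer.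
Conversely, if `ε` is integral it is a unit of `ℤ[ε]`, and its image in the finite ring
`ℤ[ε]/N` has some finite order `m`. Taking `N` to clear the denominators of `ε` gives
`ε^m = P + Q√k ∈ ℤ[√k]`, so `z^(2m) = (k − d²)^m (P + Q√k)` with `P² − kQ² = 1`.
-/

open QuadraticAlgebra

lemma ratio_eq_ratio_iff {a b a' b' : ℚ} (hb : b ≠ 0) (hb' : b' ≠ 0) :
    ratio a b = ratio a' b' ↔ a * b' = a' * b := by
  rw [ratio, ratio, if_neg hb, if_neg hb', OnePoint.coe_eq_coe, div_eq_div_iff hb hb']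

lemma ratio_mul_mul {c : ℚ} (hc : c ≠ 0) (a b : ℚ) : ratio (c * a) (c * b) = ratio a b := by
  by_cases hb : b = 0
  · simp [ratio, hb]
  · rw [ratio_eq_ratio_iff (mul_ne_zero hc hb) hb]; ring

lemma exists_pos_int_ratio_eq {a b c : ℚ} {P Q : ℤ} (ha : 0 < a) (hb : 0 < b)
    (hP : a = c * P) (hQ : b = c * Q) :
    ∃ p q : ℤ, 0 < p ∧ 0 < q ∧ p ^ 2 = P ^ 2 ∧ q ^ 2 = Q ^ 2 ∧ ratio a b = ratio p q := by
  have hP0 : P ≠ 0 := by rintro rfl; simp [hP] at ha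
  have hQ0 : Q ≠ 0 := by rintro rfl; simp [hQ] at hb
  have hc : c ≠ 0 := by rintro rfl; simp [hP] at ha
  refine ⟨|P|, |Q|, abs_pos.mpr hP0, abs_pos.mpr hQ0, sq_abs P, sq_abs Q, ?_⟩
  rw [← abs_of_pos ha, ← abs_of_pos hb, hP, hQ, abs_mul, abs_mul,
    ratio_mul_mul (abs_ne_zero.mpr hc)]
  push_cast
  rfl

lemma lft_ratio {d k a b : ℚ} (hd : 0 < d) (ha : 0 < a) (hb : 0 ≤ b) :
    lft d k (ratio a b) = ratio (d * a + k * b) (a + d * b) := by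
  rcases hb.eq_or_lt with rfl | hb
  · simp [ratio, lft, ha.ne']
  · have hx : a / b + d ≠ 0 := by positivity
    have hy : a + d * b ≠ 0 := by positivity
    simp only [ratio, hb.ne', hy, if_false, lft, hx]
    congr 1
    field_simp

namespace QuadraticAlgebra

section CommRing

variable {R : Type*} [CommRing R] {a b : R}

lemma norm_smul (c : R) (w : QuadraticAlgebra R a b) : norm (c • w) = c ^ 2 * norm w := by
  rw [Algebra.smul_def, map_mul, norm_algebraMap]

lemma isIntegral_of_trace_norm {w : QuadraticAlgebra R a b} {T N : ℤ}
    (hT : trace w = T) (hN : norm w = N) : IsIntegral ℤ w := by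
  refine ⟨Polynomial.X ^ 2 - Polynomial.C T * Polynomial.X + Polynomial.C N, by monicity!, ?_⟩
  have h := sq_sub_trace_smul_add_norm_eq_zero (z := w)
  rw [hT, hN] at h
  simp only [Polynomial.eval₂_sub, Polynomial.eval₂_add, Polynomial.eval₂_mul,
    Polynomial.eval₂_X, Polynomial.eval₂_C, Polynomial.eval₂_X_pow]
  simpa [Algebra.smul_def] using h

end CommRing

section Rat

variable {a b : ℚ}

lemma eq_smul_mk_of_ratio_eq {p q : ℚ} {w : QuadraticAlgebra ℚ a b} (hw : w.im ≠ 0)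
    (hq : q ≠ 0) (h : ratio w.re w.im = ratio p q) : w = (w.im / q) • ⟨p, q⟩ := by
  rw [ratio_eq_ratio_iff hw hq] at h
  ext
  · simp only [re_smul, smul_eq_mul]; field_simp; linear_combination h
  · simp only [im_smul, smul_eq_mul]; field_simp

lemma exists_intCast_eq_trace {w : QuadraticAlgebra ℚ a b} (hw : IsIntegral ℤ w) :
    ∃ T : ℤ, (T : ℚ) = trace w := by
  have hstar : IsIntegral ℤ (star w) := hw.map (starRingEnd _).toIntAlgHom
  have h : IsIntegral ℤ (algebraMap ℚ (QuadraticAlgebra ℚ a b) (trace w)) := by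
    rw [algebraMap_trace_eq_add_star]; exact hw.add hstar
  exact IsIntegrallyClosed.isIntegral_iff.mp ((isIntegral_algebraMap_iff algebraMap_injective).mp h)

end Rat

lemma exists_omega_pow_eq (T : ℤ) {N : ℕ} (hN : N ≠ 0) :
    ∃ m, 0 < m ∧ ∃ x y : ℤ, (ω : QuadraticAlgebra ℤ (-1) T) ^ m = ⟨1 + N * x, N * y⟩ := by
  have : NeZero N := ⟨hN⟩
  have : Finite (QuadraticAlgebra (ZMod N) (-1) T) := Finite.of_equiv _ (equivProd _ _).symm
  have hω : (ω : QuadraticAlgebra (ZMod N) (-1) T) * ω = (-1 : ℤ) • 1 + T • ω := by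
    rw [omega_mul_omega_eq_add]; simp [Algebra.smul_def]
  have hπ (z : QuadraticAlgebra ℤ (-1) T) : lift ⟨ω, hω⟩ z = ⟨z.re, z.im⟩ := by
    rw [lift_apply_apply]; ext <;> simp
  have hunit : IsUnit (ω : QuadraticAlgebra (ZMod N) (-1) T) :=
    IsUnit.of_mul_eq_one ((T : QuadraticAlgebra (ZMod N) (-1) T) - ω) (by
      rw [mul_sub, hω]; simp [mul_comm])
  -- `ω` is a unit of the finite ring `ℤ[ω]/N`, so some power of it is `1` there.
  refine ⟨orderOf hunit.unit, orderOf_pos _, ?_⟩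
  set W := (ω : QuadraticAlgebra ℤ (-1) T) ^ orderOf hunit.unit
  have hW : lift ⟨ω, hω⟩ W = 1 := by
    have h := congrArg Units.val (pow_orderOf_eq_one hunit.unit)
    rw [Units.val_pow_eq_pow_val, IsUnit.unit_spec, Units.val_one] at h
    rw [map_pow, lift_apply_apply]
    simpa using h
  rw [hπ] at hW
  have hre : ((W.re - 1 : ℤ) : ZMod N) = 0 := by
    push_cast; rw [sub_eq_zero]; exact congrArg re hW
  have him : ((W.im : ℤ) : ZMod N) = 0 := congrArg im hW
  obtain ⟨x, hx⟩ := (ZMod.intCast_zmod_eq_zero_iff_dvd _ _).mp hre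
  obtain ⟨y, hy⟩ := (ZMod.intCast_zmod_eq_zero_iff_dvd _ _).mp him
  exact ⟨x, y, by ext <;> simp <;> omega⟩

lemma exists_pow_eq_mk_intCast {a b : ℚ} {ε : QuadraticAlgebra ℚ a b} {T : ℤ}
    (hT : trace ε = T) (hN : norm ε = 1) :
    ∃ m, 0 < m ∧ ∃ P Q : ℤ, ε ^ m = ⟨P, Q⟩ := by
  have hε : ε * ε = (-1 : ℤ) • 1 + T • ε := by
    rw [← sq, sq_eq_trace_smul_sub_norm, hT, hN]; simp [Algebra.smul_def]; ring
  set N := ε.re.den * ε.im.den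
  obtain ⟨m, hm, x, y, hxy⟩ := exists_omega_pow_eq T (N := N) (by positivity)
  have hpow : ε ^ m = (1 + N * x : ℤ) • 1 + (N * y : ℤ) • ε := by
    have h := lift_apply_apply ⟨ε, hε⟩ (ω ^ m)
    rw [map_pow, hxy] at h
    simpa using h
  refine ⟨m, hm, 1 + N * x + y * ε.re.num * ε.im.den, y * ε.im.num * ε.re.den, ?_⟩
  rw [hpow]
  ext <;> simp [N, ← Rat.mul_den_eq_num] <;> ring

end QuadraticAlgebra

noncomputable def normalizedSq (d k : ℚ) : QuadraticAlgebra ℚ k 0 :=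
  (k - d ^ 2)⁻¹ • (⟨d, 1⟩ ^ 2)

section

variable {d k : ℚ}

lemma re_pos_im_nonneg_pow (hd : 0 < d) (hk : 0 ≤ k) (n : ℕ) :
    0 < ((⟨d, 1⟩ : QuadraticAlgebra ℚ k 0) ^ n).re ∧
      0 ≤ ((⟨d, 1⟩ : QuadraticAlgebra ℚ k 0) ^ n).im := by
  induction n with
  | zero => simp
  | succ n ih =>
    obtain ⟨hre, him⟩ := ih
    rw [pow_succ']
    simp only [re_mul, im_mul]
    constructor <;> positivity

lemma im_pow_pos (hd : 0 < d) (hk : 0 ≤ k) {n : ℕ} (hn : n ≠ 0) :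
    0 < ((⟨d, 1⟩ : QuadraticAlgebra ℚ k 0) ^ n).im := by
  obtain ⟨n, rfl⟩ := Nat.exists_eq_succ_of_ne_zero hn
  obtain ⟨hre, him⟩ := re_pos_im_nonneg_pow hd hk n
  rw [pow_succ']
  simp only [im_mul]
  positivity

lemma lft_iterate_infty (hd : 0 < d) (hk : 0 ≤ k) (n : ℕ) :
    (lft d k)^[n] OnePoint.infty =
      ratio ((⟨d, 1⟩ : QuadraticAlgebra ℚ k 0) ^ n).re
        ((⟨d, 1⟩ : QuadraticAlgebra ℚ k 0) ^ n).im := by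
  induction n with
  | zero => simp [ratio]
  | succ n ih =>
    obtain ⟨hre, him⟩ := re_pos_im_nonneg_pow hd hk n
    rw [Function.iterate_succ_apply', ih, lft_ratio hd hre him, pow_succ']
    simp only [re_mul, im_mul]
    congr 1 <;> ring

lemma norm_mk_one : norm (⟨d, 1⟩ : QuadraticAlgebra ℚ k 0) = d ^ 2 - k := by
  simp [norm_def]; ring

lemma norm_normalizedSq (hdk : k ≠ d ^ 2) : norm (normalizedSq d k) = 1 := by
  have : k - d ^ 2 ≠ 0 := sub_ne_zero.mpr hdk
  rw [normalizedSq, QuadraticAlgebra.norm_smul, map_pow, norm_mk_one]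
  field_simp; ring

lemma trace_normalizedSq (hdk : k ≠ d ^ 2) :
    trace (normalizedSq d k) = 2 + 4 * d ^ 2 / (k - d ^ 2) := by
  have : k - d ^ 2 ≠ 0 := sub_ne_zero.mpr hdk
  simp [normalizedSq, trace_def, sq]
  field_simp; ring

lemma mk_one_pow_two_mul (hdk : k ≠ d ^ 2) (n : ℕ) :
    (⟨d, 1⟩ : QuadraticAlgebra ℚ k 0) ^ (2 * n) = (k - d ^ 2) ^ n • normalizedSq d k ^ n := by
  have : k - d ^ 2 ≠ 0 := sub_ne_zero.mpr hdk
  rw [normalizedSq, smul_pow, smul_smul, ← mul_pow, mul_inv_cancel₀ this, one_pow, one_smul,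
    pow_mul]

lemma normalizedSq_pow_eq {n : ℕ} {c : ℚ} {u : QuadraticAlgebra ℚ k 0} (hdk : k ≠ d ^ 2)
    (hz : (⟨d, 1⟩ : QuadraticAlgebra ℚ k 0) ^ n = c • u) (hu : norm u ^ 2 = 1) :
    normalizedSq d k ^ (2 * n) = u ^ 4 := by
  have hnorm : (d ^ 2 - k) ^ n = c ^ 2 * norm u := by
    rw [← norm_mk_one, ← map_pow, hz, QuadraticAlgebra.norm_smul]
  have hc : (k - d ^ 2) ^ (2 * n) = c ^ 4 := by
    rw [← neg_sub, pow_mul, neg_sq, ← pow_mul, mul_comm, pow_mul, hnorm]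
    linear_combination c ^ 4 * hu
  have hc0 : c ^ 4 ≠ 0 := hc ▸ pow_ne_zero _ (sub_ne_zero.mpr hdk)
  calc normalizedSq d k ^ (2 * n)
      = ((k - d ^ 2) ^ (2 * n))⁻¹ • ((⟨d, 1⟩ : QuadraticAlgebra ℚ k 0) ^ n) ^ 4 := by
        rw [normalizedSq, smul_pow, inv_pow, ← pow_mul, ← pow_mul]
        ring_nf
    _ = u ^ 4 := by rw [hc, hz, smul_pow, smul_smul, inv_mul_cancel₀ hc0, one_smul]

lemma exists_iterate_eq_ratio_of_trace (hd : 0 < d) (hk : 0 ≤ k) (hdk : k ≠ d ^ 2) {T : ℤ}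
    (hT : trace (normalizedSq d k) = T) :
    ∃ n, 1 ≤ n ∧ ∃ p q : ℤ, 0 < p ∧ 0 < q ∧ norm (⟨p, q⟩ : QuadraticAlgebra ℚ k 0) = 1 ∧
      (lft d k)^[n] OnePoint.infty = ratio p q := by
  obtain ⟨m, hm, P, Q, hPQ⟩ := exists_pow_eq_mk_intCast hT (norm_normalizedSq hdk)
  have hz := mk_one_pow_two_mul hdk m
  rw [hPQ] at hz
  obtain ⟨p, q, hp, hq, hp2, hq2, hratio⟩ := exists_pos_int_ratio_eq
    (re_pos_im_nonneg_pow hd hk (2 * m)).1 (im_pow_pos hd hk (n := 2 * m) (by omega))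
    (by rw [hz]; rfl) (by rw [hz]; rfl)
  refine ⟨2 * m, by omega, p, q, hp, hq, ?_, by rw [lft_iterate_infty hd hk, hratio]⟩
  have hnorm : norm (normalizedSq d k ^ m) = 1 := by
    rw [map_pow, norm_normalizedSq hdk, one_pow]
  have hp2' : (p : ℚ) ^ 2 = P ^ 2 := by exact_mod_cast hp2
  have hq2' : (q : ℚ) ^ 2 = Q ^ 2 := by exact_mod_cast hq2
  rw [hPQ, norm_def] at hnorm
  rw [norm_def]
  linear_combination hnorm + hp2' - k * hq2'

lemma isIntegral_normalizedSq_of_iterate_eq (hd : 0 < d) (hk : 0 ≤ k) (hdk : k ≠ d ^ 2) {n : ℕ}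
    (hn : n ≠ 0) {p q : ℤ} (hq : 0 < q)
    (hpq : norm (⟨p, q⟩ : QuadraticAlgebra ℚ k 0) = 1 ∨ norm (⟨p, q⟩ : QuadraticAlgebra ℚ k 0) = -1)
    (hit : (lft d k)^[n] OnePoint.infty = ratio p q) :
    IsIntegral ℤ (normalizedSq d k) := by
  rw [lft_iterate_infty hd hk] at hit
  have hz := eq_smul_mk_of_ratio_eq (im_pow_pos hd hk hn).ne' (by positivity) hit
  refine IsIntegral.of_pow (by omega : 0 < 2 * n) ?_
  rw [normalizedSq_pow_eq hdk hz (by rcases hpq with h | h <;> simp [h])]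
  have htrace : trace (⟨p, q⟩ : QuadraticAlgebra ℚ k 0) = (2 * p : ℤ) := by simp [trace_def]
  rcases hpq with h | h
  · exact (isIntegral_of_trace_norm htrace (N := 1) (by simp [h])).pow 4
  · exact (isIntegral_of_trace_norm htrace (N := -1) (by simp [h])).pow 4

end

lemma natCast_ne_sq_of_not_isSquare {k : ℕ} (hk : ¬ IsSquare k) (d : ℚ) : (k : ℚ) ≠ d ^ 2 :=
  fun h => hk (Rat.isSquare_natCast_iff.mp ⟨d, by rw [h, sq]⟩)

lemma norm_mk_intCast (k : ℕ) (p q : ℤ) :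
    norm (⟨p, q⟩ : QuadraticAlgebra ℚ k 0) = ((p ^ 2 - k * q ^ 2 : ℤ) : ℚ) := by
  push_cast [norm_def]; ring

theorem stmt5_general (k : ℕ) (hknsq : ¬ IsSquare k) (d : ℚ) (hd : 0 < d) :
    (∃ R : ℤ, (R : ℚ) = 4 * d ^ 2 / ((k : ℚ) - d ^ 2)) ↔
    ∃ n : ℕ, 1 ≤ n ∧ ∃ p q : ℤ, 0 < p ∧ 0 < q ∧
      (p ^ 2 - (k : ℤ) * q ^ 2 = 1 ∨ p ^ 2 - (k : ℤ) * q ^ 2 = -1) ∧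
      (lft d (k : ℚ))^[n] OnePoint.infty = ratio (p : ℚ) (q : ℚ) := by
  have hdk := natCast_ne_sq_of_not_isSquare hknsq d
  have hk : (0 : ℚ) ≤ k := k.cast_nonneg
  constructor
  · rintro ⟨R, hR⟩
    obtain ⟨n, hn, p, q, hp, hq, hpq, hit⟩ :=
      exists_iterate_eq_ratio_of_trace hd hk hdk (T := R + 2)
        (by rw [trace_normalizedSq hdk, ← hR]; push_cast; ring)
    rw [norm_mk_intCast] at hpq
    exact ⟨n, hn, p, q, hp, hq, Or.inl (mod_cast hpq), hit⟩
  · rintro ⟨n, hn, p, q, -, hq, hpell, hit⟩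
    have hpq : norm (⟨p, q⟩ : QuadraticAlgebra ℚ k 0) = 1 ∨
        norm (⟨p, q⟩ : QuadraticAlgebra ℚ k 0) = -1 := by
      rw [norm_mk_intCast]; exact_mod_cast hpell
    obtain ⟨T, hT⟩ := exists_intCast_eq_trace
      (isIntegral_normalizedSq_of_iterate_eq hd hk hdk (by omega) hq hpq hit)
    exact ⟨T - 2, by push_cast; rw [hT, trace_normalizedSq hdk]; ring⟩

/-- For `k` a non-square positive integer and `d` a positive rational,
`4d²/(k − d²)` is an integer if and only if some iterate `f^n(∞)` (`n ≥ 1`) of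
`f(x) = (dx+k)/(x+d)` equals `p/q` with integers `p, q` satisfying `p² − kq² = ±1`. -/
theorem stmt5 (k : ℕ) (hk : 0 < k) (hknsq : ¬ IsSquare k) (d : ℚ) (hd : 0 < d) :
    (∃ R : ℤ, (R : ℚ) = 4 * d ^ 2 / ((k : ℚ) - d ^ 2)) ↔
    ∃ n : ℕ, 1 ≤ n ∧ ∃ p q : ℤ, 0 < p ∧ 0 < q ∧
      (p ^ 2 - (k : ℤ) * q ^ 2 = 1 ∨ p ^ 2 - (k : ℤ) * q ^ 2 = -1) ∧
      (lft d (k : ℚ))^[n] OnePoint.infty = ratio (p : ℚ) (q : ℚ) :=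
  stmt5_general k hknsq d hd
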